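/- If CR(X, K) = ∅ for a C¹ vector field X and compact set K, then there exist a C¹ neighborhood 𝒰 of X and an open neighborhood U of K such that CR(Y, closure(U)) = ∅ for all Y ∈ 𝒰. -/

import Mathlib

/-! If the conclusion failed, there would be vector fields `Y n → X` uniformly, with flows `ψ n`,
and chain transitive sets of `ψ n` inside the `1/(n+1)`-neighbourhoods of `K`. By Grönwall's
inequality on compact time intervals, a limit point `x` of these sets has its whole `φ`-orbit
in `K`. So the maximal invariant set of `K` is a nonempty compact invariant set on which every
time-`t` map is continuous. A minimal closed invariant subset of it (Zorn) is the ω-limit set of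
each of its points, hence chain transitive, contradicting `CR(X, K) = ∅`. -/

open Set Metric Filter Module

variable {V : Type*} [NormedAddCommGroup V] [NormedSpace ℝ V]

/-- `φ` is the flow generated by the vector field `X`. -/
def IsFlowOf (X : V → V) (φ : ℝ → V → V) : Prop :=
  (∀ x, φ 0 x = x) ∧ (∀ s t x, φ (s + t) x = φ s (φ t x)) ∧
    ∀ x t, HasDerivAt (fun s => φ s x) (X (φ t x)) t

/-- Invariance of a subbundle `E` under the cocycle `A` over points of `Λ`. -/
def InvariantBundle (φ : ℝ → V → V) (A : ℝ → V → V →L[ℝ] V) (Λ : Set V)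
    (E : V → Submodule ℝ V) : Prop :=
  ∀ x ∈ Λ, ∀ t : ℝ, ∀ v ∈ E x, A t x v ∈ E (φ t x)

/-- A dominated splitting `E ⊕ F` over `Λ` for the cocycle `A` over the flow `φ`. -/
def DominatedOn (φ : ℝ → V → V) (A : ℝ → V → V →L[ℝ] V) (Λ : Set V)
    (E F : V → Submodule ℝ V) : Prop :=
  (∀ x ∈ Λ, E x ⊓ F x = ⊥ ∧ E x ⊔ F x = ⊤) ∧
    InvariantBundle φ A Λ E ∧ InvariantBundle φ A Λ F ∧
    ∃ C > 0, ∃ lam > 0, ∀ x ∈ Λ, ∀ t > 0, ∀ u ∈ E x, ∀ v ∈ F x,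
      ‖A t x u‖ * ‖v‖ ≤ C * Real.exp (-lam * t) * (‖u‖ * ‖A t x v‖)

/-- The tangent flow of a flow `φ`: the derivative of the time-`t` map. -/
noncomputable def tangentFlow (φ : ℝ → V → V) (t : ℝ) (x : V) : V →L[ℝ] V :=
  fderiv ℝ (φ t) x

/-- A compact invariant chain transitive set. -/
def ChainTransitiveSet {M : Type*} [MetricSpace M] (φ : ℝ → M → M) (Λ : Set M) : Prop :=
  IsCompact Λ ∧ (∀ t : ℝ, φ t '' Λ = Λ) ∧
    ∀ ε > (0 : ℝ), ∀ x ∈ Λ, ∀ y ∈ Λ, ∃ n : ℕ, ∃ xs : ℕ → M, ∃ ts : ℕ → ℝ,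
      1 ≤ n ∧ xs 0 = x ∧ xs n = y ∧ (∀ i ≤ n, xs i ∈ Λ) ∧
      ∀ i < n, 1 ≤ ts i ∧ dist (φ (ts i) (xs i)) (xs (i + 1)) < ε

/-- `CR(X, K)`: the union of all chain transitive sets of the flow `φ` contained in `K`. -/
def CRset {M : Type*} [MetricSpace M] (φ : ℝ → M → M) (K : Set M) : Set M :=
  {x | ∃ Λ : Set M, Λ ⊆ K ∧ ChainTransitiveSet φ Λ ∧ x ∈ Λ}

open Topology
open scoped NNReal omegaLimit

theorem continuous_gronwallBound (K x : ℝ) :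
    Continuous fun p : ℝ × ℝ => gronwallBound p.1 K p.2 x := by
  unfold gronwallBound
  split_ifs <;> fun_prop

namespace IsFlowOf

variable {X Y : V → V} {φ ψ : ℝ → V → V}

theorem map_zero (hφ : IsFlowOf X φ) (x : V) : φ 0 x = x := hφ.1 x

theorem map_add (hφ : IsFlowOf X φ) (s t : ℝ) (x : V) : φ (s + t) x = φ s (φ t x) := hφ.2.1 s t x

theorem hasDerivAt (hφ : IsFlowOf X φ) (x : V) (t : ℝ) :
    HasDerivAt (fun s => φ s x) (X (φ t x)) t :=
  hφ.2.2 x t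

theorem continuous_orbit (hφ : IsFlowOf X φ) (x : V) : Continuous fun t => φ t x :=
  continuous_iff_continuousAt.2 fun t => (hφ.hasDerivAt x t).continuousAt

theorem reverse (hφ : IsFlowOf X φ) : IsFlowOf (-X) (fun t => φ (-t)) := by
  refine ⟨fun x => by simpa using hφ.map_zero x, fun s t x => by simp only [neg_add, hφ.map_add],
    fun x t => ?_⟩
  simpa [Function.comp_def] using (hφ.hasDerivAt x (-t)).scomp t (hasDerivAt_neg t)

theorem dist_le_gronwallBound (hφ : IsFlowOf X φ) (hψ : IsFlowOf Y ψ) {s : Set V} {L : ℝ≥0}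
    (hL : LipschitzOnWith L X s) {ε : ℝ} (hYX : ∀ z, ‖Y z - X z‖ ≤ ε) {x y : V} {T : ℝ}
    (hT : 0 ≤ T) (hx : ∀ t ∈ Icc 0 T, φ t x ∈ s) (hy : ∀ t ∈ Icc 0 T, ψ t y ∈ s) :
    dist (ψ T y) (φ T x) ≤ gronwallBound (dist y x) L ε T := by
  have h := dist_le_of_approx_trajectories_ODE_of_mem (v := fun _ => X) (s := fun _ => s)
    (fun _ _ => hL) (hψ.continuous_orbit y).continuousOn
    (fun t _ => (hψ.hasDerivAt y t).hasDerivWithinAt)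
    (fun t _ => (dist_eq_norm _ _).trans_le (hYX _))
    (fun t ht => hy t (Ico_subset_Icc_self ht)) (hφ.continuous_orbit x).continuousOn
    (fun t _ => (hφ.hasDerivAt x t).hasDerivWithinAt) (fun t _ => (dist_self _).le)
    (fun t ht => hx t (Ico_subset_Icc_self ht)) (le_of_eq (by rw [hψ.map_zero, hφ.map_zero]))
    T ⟨hT, le_rfl⟩
  simpa using h

section Approximation

variable {Y : ℕ → V → V} {ψ : ℕ → ℝ → V → V} {ε : ℕ → ℝ} {B : Set V} {q : ℕ → V} {x : V}

theorem tendsto_of_vectorField_approx_of_nonneg (hX : LocallyLipschitz X) (hφ : IsFlowOf X φ)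
    (hψ : ∀ n, IsFlowOf (Y n) (ψ n)) (hε : Tendsto ε atTop (𝓝 0))
    (hYX : ∀ n z, ‖Y n z - X z‖ ≤ ε n) (hB : IsCompact B) (hqB : ∀ n t, ψ n t (q n) ∈ B)
    (hq : Tendsto q atTop (𝓝 x)) {t : ℝ} (ht : 0 ≤ t) :
    Tendsto (fun n => ψ n t (q n)) atTop (𝓝 (φ t x)) := by
  have hs : IsCompact (B ∪ (fun u => φ u x) '' Icc 0 t) :=
    hB.union (isCompact_Icc.image (hφ.continuous_orbit x))
  obtain ⟨L, hL⟩ := hX.locallyLipschitzOn.exists_lipschitzOnWith_of_compact hs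
  have hbound : ∀ n, dist (ψ n t (q n)) (φ t x) ≤ gronwallBound (dist (q n) x) L (ε n) t :=
    fun n => hφ.dist_le_gronwallBound (hψ n) hL (hYX n) ht
      (fun u hu => Or.inr ⟨u, hu, rfl⟩) (fun u _ => Or.inl (hqB n u))
  have hlim : Tendsto (fun n => gronwallBound (dist (q n) x) L (ε n) t) atTop (𝓝 0) := by
    simpa only [gronwallBound_ε0_δ0, Function.comp_def] using
      ((continuous_gronwallBound L t).tendsto (0, 0)).comp
        ((tendsto_iff_dist_tendsto_zero.1 hq).prodMk_nhds hε)
  exact tendsto_iff_dist_tendsto_zero.2 (squeeze_zero (fun _ => dist_nonneg) hbound hlim)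

theorem tendsto_of_vectorField_approx (hX : LocallyLipschitz X) (hφ : IsFlowOf X φ)
    (hψ : ∀ n, IsFlowOf (Y n) (ψ n)) (hε : Tendsto ε atTop (𝓝 0))
    (hYX : ∀ n z, ‖Y n z - X z‖ ≤ ε n) (hB : IsCompact B) (hqB : ∀ n t, ψ n t (q n) ∈ B)
    (hq : Tendsto q atTop (𝓝 x)) (t : ℝ) :
    Tendsto (fun n => ψ n t (q n)) atTop (𝓝 (φ t x)) := by
  rcases le_total 0 t with ht | ht
  · exact hφ.tendsto_of_vectorField_approx_of_nonneg hX hψ hε hYX hB hqB hq ht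
  · simpa using hφ.reverse.tendsto_of_vectorField_approx_of_nonneg hX.neg
      (fun n => (hψ n).reverse) hε
      (fun n z => by simpa only [Pi.neg_apply, neg_sub_neg, norm_sub_rev] using hYX n z) hB
      (fun n u => hqB n (-u)) hq (neg_nonneg.2 ht)

theorem tendsto_of_forall_mem (hX : LocallyLipschitz X) (hφ : IsFlowOf X φ) {K : Set V}
    (hK : IsCompact K) (hqK : ∀ n t, φ t (q n) ∈ K) (hq : Tendsto q atTop (𝓝 x)) (t : ℝ) :
    Tendsto (fun n => φ t (q n)) atTop (𝓝 (φ t x)) :=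
  hφ.tendsto_of_vectorField_approx hX (fun _ => hφ) tendsto_const_nhds
    (fun _ _ => by rw [sub_self, norm_zero]) hK hqK hq t

end Approximation

end IsFlowOf

theorem IsCompact.exists_minimal_isInvariant {τ α : Type*} [TopologicalSpace α] [T2Space α]
    {ϕ : τ → α → α} {Λ : Set α} (hΛ : IsCompact Λ) (hne : Λ.Nonempty)
    (hinv : IsInvariant ϕ Λ) :
    ∃ m ⊆ Λ, Minimal (fun s : Set α => s.Nonempty ∧ IsClosed s ∧ IsInvariant ϕ s) m := by
  set S := {s : Set α | s.Nonempty ∧ IsClosed s ∧ IsInvariant ϕ s ∧ s ⊆ Λ}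
  have hchain : ∀ c ⊆ S, IsChain (· ⊆ ·) c → c.Nonempty → ∃ lb ∈ S, ∀ s ∈ c, lb ⊆ s := by
    rintro c hcS hc ⟨s₀, hs₀⟩
    have : Nonempty c := ⟨⟨s₀, hs₀⟩⟩
    have hdir : DirectedOn (· ⊇ ·) c := fun s hs t ht =>
      (hc.total hs ht).elim (fun h => ⟨s, hs, subset_rfl, h⟩) (fun h => ⟨t, ht, h, subset_rfl⟩)
    refine ⟨⋂₀ c, ⟨?_, isClosed_sInter fun s hs => (hcS hs).2.1, fun t => ?_,
      (sInter_subset_of_mem hs₀).trans (hcS hs₀).2.2.2⟩, fun s hs => sInter_subset_of_mem hs⟩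
    · exact IsCompact.nonempty_sInter_of_directed_nonempty_isCompact_isClosed hdir
        (fun s hs => (hcS hs).1) (fun s hs => hΛ.of_isClosed_subset (hcS hs).2.1 (hcS hs).2.2.2)
        (fun s hs => (hcS hs).2.1)
    · exact mapsTo_sInter.2 fun s hs => ((hcS hs).2.2.1 t).mono_left (sInter_subset_of_mem hs)
  obtain ⟨m, hmΛ, hm⟩ := zorn_superset_nonempty S hchain Λ ⟨hne, hΛ.isClosed, hinv, subset_rfl⟩
  exact ⟨m, hmΛ, ⟨hm.prop.1, hm.prop.2.1, hm.prop.2.2.1⟩,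
    fun s hs hsm => hm.2 ⟨hs.1, hs.2.1, hs.2.2, hsm.trans hmΛ⟩ hsm⟩

theorem IsInvariant.image_eq {τ α : Type*} [AddGroup τ] {ϕ : τ → α → α} (h0 : ∀ x, ϕ 0 x = x)
    (hadd : ∀ s t x, ϕ (s + t) x = ϕ s (ϕ t x)) {Λ : Set α} (hΛ : IsInvariant ϕ Λ) (t : τ) :
    ϕ t '' Λ = Λ := by
  refine (hΛ t).image_subset.antisymm fun z hz => ⟨ϕ (-t) z, hΛ (-t) hz, ?_⟩
  rw [← hadd, add_neg_cancel, h0]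

section ChainTransitivity

variable {M : Type*} [MetricSpace M] {φ : ℝ → M → M}

theorem CRset_mono {K K' : Set M} (h : K ⊆ K') : CRset φ K ⊆ CRset φ K' :=
  fun _ ⟨Λ, hΛK, hΛ, hx⟩ => ⟨Λ, hΛK.trans h, hΛ, hx⟩

theorem chainTransitiveSet_of_forall_exists_dist_lt {Λ : Set M} (hΛ : IsCompact Λ)
    (hinv : ∀ t, φ t '' Λ = Λ)
    (h : ∀ ε > (0 : ℝ), ∀ x ∈ Λ, ∀ y ∈ Λ, ∃ t ≥ (1 : ℝ), dist (φ t x) y < ε) :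
    ChainTransitiveSet φ Λ := by
  refine ⟨hΛ, hinv, fun ε hε x hx y hy => ?_⟩
  obtain ⟨t, ht, hxy⟩ := h ε hε x hx y hy
  refine ⟨1, fun i => if i = 0 then x else y, fun _ => t, le_rfl, rfl, rfl,
    fun i _ => by dsimp only; split_ifs <;> assumption, fun i hi => ?_⟩
  obtain rfl : i = 0 := Nat.lt_one_iff.1 hi
  exact ⟨ht, by simpa using hxy⟩

theorem closure_image2_singleton_subset {m : Set M} (hm : IsClosed m) (hinv : IsInvariant φ m)
    {a : M} (ha : a ∈ m) : closure (image2 φ univ {a}) ⊆ m :=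
  closure_minimal (image2_subset_iff.2 fun t _ _ hb => hinv t (mem_singleton_iff.1 hb ▸ ha)) hm

theorem omegaLimit_singleton_subset {m : Set M} (hm : IsClosed m) (hinv : IsInvariant φ m)
    {a : M} (ha : a ∈ m) : ω⁺ φ {a} ⊆ m :=
  (omegaLimit_subset_closure_image2 _ _ _ univ_mem).trans
    (closure_image2_singleton_subset hm hinv ha)

theorem isInvariant_omegaLimit_singleton (hadd : ∀ s t x, φ (s + t) x = φ s (φ t x))
    {m : Set M} (hm : IsClosed m) (hinv : IsInvariant φ m) (hcont : ∀ t, ContinuousOn (φ t) m)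
    {a : M} (ha : a ∈ m) : IsInvariant φ (ω⁺ φ {a}) := by
  intro t y hy
  have hym : y ∈ m := omegaLimit_singleton_subset hm hinv ha hy
  rw [mem_omegaLimit_singleton_iff_mapClusterPt] at hy ⊢
  have horbit : map (fun s => φ s a) atTop ≤ 𝓟 m :=
    le_principal_iff.2 (mem_map.2 (univ_mem' fun s => hinv s ha))
  have hshift : MapClusterPt (φ t y) atTop (φ t ∘ fun s => φ s a) :=
    hy.tendsto_comp' ((hcont t y hym).tendsto.mono_left (inf_le_inf_left _ horbit))
  refine MapClusterPt.of_comp (tendsto_atTop_add_const_left atTop t tendsto_id) ?_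
  simpa only [Function.comp_def, hadd, id] using hshift

theorem Minimal.chainTransitiveSet (h0 : ∀ x, φ 0 x = x)
    (hadd : ∀ s t x, φ (s + t) x = φ s (φ t x)) {m : Set M}
    (hm : Minimal (fun s : Set M => s.Nonempty ∧ IsClosed s ∧ IsInvariant φ s) m)
    (hmc : IsCompact m) (hcont : ∀ t, ContinuousOn (φ t) m) : ChainTransitiveSet φ m := by
  obtain ⟨-, hmcl, hinv⟩ := hm.prop
  refine chainTransitiveSet_of_forall_exists_dist_lt hmc (hinv.image_eq h0 hadd)
    fun ε hε x hx y hy => ?_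
  have hω : (ω⁺ φ {x}).Nonempty :=
    nonempty_omegaLimit_of_isCompact_absorbing _ _ _ hmc
      ⟨univ, univ_mem, closure_image2_singleton_subset hmcl hinv hx⟩ (singleton_nonempty x)
  have hmω : m ⊆ ω⁺ φ {x} :=
    hm.2 ⟨hω, isClosed_omegaLimit _ _ _, isInvariant_omegaLimit_singleton hadd hmcl hinv hcont hx⟩
      (omegaLimit_singleton_subset hmcl hinv hx)
  have hy' := omegaLimit_subset_closure_image2 _ _ _ (Ici_mem_atTop (1 : ℝ)) (hmω hy)
  obtain ⟨_, ⟨t, ht, _, rfl, rfl⟩, hdist⟩ := Metric.mem_closure_iff.1 hy' ε hε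
  exact ⟨t, ht, by rwa [dist_comm]⟩

theorem CRset_nonempty_of_isInvariant (h0 : ∀ x, φ 0 x = x)
    (hadd : ∀ s t x, φ (s + t) x = φ s (φ t x)) {Λ : Set M} (hΛ : IsCompact Λ)
    (hne : Λ.Nonempty) (hinv : IsInvariant φ Λ) (hcont : ∀ t, ContinuousOn (φ t) Λ) :
    (CRset φ Λ).Nonempty := by
  obtain ⟨m, hmΛ, hm⟩ := hΛ.exists_minimal_isInvariant hne hinv
  obtain ⟨x, hx⟩ := hm.prop.1
  exact ⟨x, m, hmΛ, hm.chainTransitiveSet h0 hadd (hΛ.of_isClosed_subset hm.prop.2.1 hmΛ)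
    (fun t => (hcont t).mono hmΛ), hx⟩

end ChainTransitivity

theorem mem_closure_of_tendsto_of_mem_cthickening {ι α : Type*} [PseudoMetricSpace α]
    {l : Filter ι} [l.NeBot] {E : Set α} {z : ι → α} {y : α} {δ : ι → ℝ}
    (hz : Tendsto z l (𝓝 y)) (hδ : Tendsto δ l (𝓝 0)) (h : ∀ i, z i ∈ cthickening (δ i) E) :
    y ∈ closure E := by
  rw [closure_eq_iInter_cthickening]
  refine mem_iInter₂.2 fun η hη => isClosed_cthickening.mem_of_tendsto hz ?_
  filter_upwards [hδ.eventually (gt_mem_nhds hη)] with i hi using cthickening_mono hi.le E (h i)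

def maximalInvariantSet {α : Type*} (φ : ℝ → α → α) (K : Set α) : Set α :=
  {z | ∀ t, φ t z ∈ K}

section MaximalInvariantSet

variable {α : Type*} {φ : ℝ → α → α} {K : Set α}

theorem maximalInvariantSet_subset (h0 : ∀ x, φ 0 x = x) : maximalInvariantSet φ K ⊆ K :=
  fun z hz => h0 z ▸ hz 0

theorem isInvariant_maximalInvariantSet (hadd : ∀ s t x, φ (s + t) x = φ s (φ t x)) :
    IsInvariant φ (maximalInvariantSet φ K) :=
  fun t _ hz s => hadd s t _ ▸ hz (s + t)

end MaximalInvariantSet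

namespace IsFlowOf

variable {X : V → V} {φ : ℝ → V → V} {K : Set V}

theorem isClosed_maximalInvariantSet (hX : LocallyLipschitz X) (hφ : IsFlowOf X φ)
    (hK : IsCompact K) : IsClosed (maximalInvariantSet φ K) :=
  IsSeqClosed.isClosed fun _ _ hw hwz t => hK.isClosed.mem_of_tendsto
    (hφ.tendsto_of_forall_mem hX hK hw hwz t) (Eventually.of_forall fun n => hw n t)

theorem continuousOn_maximalInvariantSet (hX : LocallyLipschitz X) (hφ : IsFlowOf X φ)
    (hK : IsCompact K) (t : ℝ) : ContinuousOn (φ t) (maximalInvariantSet φ K) := by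
  rw [continuousOn_iff_continuous_domRestrict, continuous_iff_seqContinuous]
  exact fun {w _} hwz => hφ.tendsto_of_forall_mem hX hK (fun n => (w n).2)
    (continuous_subtype_val.seqContinuous hwz) t

theorem CRset_nonempty_of_approx [ProperSpace V] (hX : LocallyLipschitz X)
    (hφ : IsFlowOf X φ) (hK : IsCompact K) {Y : ℕ → V → V} {ψ : ℕ → ℝ → V → V}
    (hψ : ∀ n, IsFlowOf (Y n) (ψ n)) {ε : ℕ → ℝ} (hε : Tendsto ε atTop (𝓝 0))
    (hYX : ∀ n z, ‖Y n z - X z‖ ≤ ε n) {δ : ℕ → ℝ} (hδ : Tendsto δ atTop (𝓝 0))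
    (hCR : ∀ n, (CRset (ψ n) (cthickening (δ n) K)).Nonempty) : (CRset φ K).Nonempty := by
  choose p Λ hΛK hΛ hpΛ using hCR
  obtain ⟨D, hD⟩ := hδ.bddAbove_range
  have horbit : ∀ n t, ψ n t (p n) ∈ cthickening (δ n) K := fun n t =>
    hΛK n ((hΛ n).2.1 t ▸ mem_image_of_mem _ (hpΛ n))
  have hB : ∀ n t, ψ n t (p n) ∈ cthickening D K := fun n t =>
    cthickening_mono (hD ⟨n, rfl⟩) K (horbit n t)
  obtain ⟨x, -, σ, hσ, hx⟩ := hK.cthickening.tendsto_subseq fun n => (hψ n).map_zero (p n) ▸ hB n 0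
  have hxK : x ∈ maximalInvariantSet φ K := fun t =>
    hK.isClosed.closure_eq ▸ mem_closure_of_tendsto_of_mem_cthickening
      (hφ.tendsto_of_vectorField_approx hX (fun k => hψ (σ k)) (hε.comp hσ.tendsto_atTop)
        (fun k => hYX (σ k)) hK.cthickening (fun k => hB (σ k)) hx t)
      (hδ.comp hσ.tendsto_atTop) (fun k => horbit (σ k) t)
  have hcompact : IsCompact (maximalInvariantSet φ K) := hK.of_isClosed_subset
    (hφ.isClosed_maximalInvariantSet hX hK) (maximalInvariantSet_subset hφ.map_zero)
  exact (CRset_nonempty_of_isInvariant hφ.map_zero hφ.map_add hcompact ⟨x, hxK⟩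
    (isInvariant_maximalInvariantSet hφ.map_add) (hφ.continuousOn_maximalInvariantSet hX hK)).mono
    (CRset_mono (maximalInvariantSet_subset hφ.map_zero))

end IsFlowOf

/-- If `CR(X, K) = ∅`, then for every `C¹` vector field `Y` sufficiently `C¹`-close to `X`
and some open neighborhood `U` of `K`, one has `CR(Y, closure U) = ∅`. -/
theorem CRset_empty_robust [FiniteDimensional ℝ V]
    (X : V → V) (hX : ContDiff ℝ 1 X) (φ : ℝ → V → V) (hφ : IsFlowOf X φ)
    (K : Set V) (hK : IsCompact K) (hempty : CRset φ K = ∅) :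
    ∃ ε > (0 : ℝ), ∃ U : Set V, IsOpen U ∧ K ⊆ U ∧
      ∀ Y : V → V, ContDiff ℝ 1 Y →
        (∀ x, ‖Y x - X x‖ + ‖fderiv ℝ Y x - fderiv ℝ X x‖ < ε) →
        ∀ ψ : ℝ → V → V, IsFlowOf Y ψ → CRset ψ (closure U) = ∅ := by
  by_contra! hcon
  have hδ : Tendsto (fun n : ℕ => 1 / ((n : ℝ) + 1)) atTop (𝓝 0) :=
    tendsto_one_div_add_atTop_nhds_zero_nat
  choose Y _ hYX ψ hψ hCR using fun n : ℕ => hcon (1 / (n + 1)) (by positivity)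
    (thickening (1 / (n + 1)) K) isOpen_thickening (self_subset_thickening (by positivity) K)
  refine (hφ.CRset_nonempty_of_approx hX.locallyLipschitz hK hψ hδ (fun n z => ?_) hδ
    fun n => (hCR n).mono (CRset_mono (closure_thickening_subset_cthickening _ _))).ne_empty hempty
  exact (le_add_of_nonneg_right (norm_nonneg _)).trans (hYX n z).le
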